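/- arXiv:1107.1206 — 6 statements merged into one kernel-verified Lean document; each statement's English description precedes it below -/
import Mathlib

section
/- Let S be a finite set, R ⊆ S × S a relation, μ, ν sub-probability distributions on S (i.e. functions S → [0,1] with total mass at most 1), and ε ≥ 0. If there exists an ε-weight function for (μ, ν) with respect to R, then for every subset E ⊆ S we have μ(E) ≤ ν(R(E)) + ε, where R(E) = {y | ∃ x ∈ E, (x,y) ∈ R}. -/
open Finset

noncomputable def mass {S : Type*} [Fintype S] (μ : S → ℝ) (E : Set S) : ℝ :=
  ∑ s, Set.indicator E μ s

def relImage {S T : Type*} (R : S → T → Prop) (E : Set S) : Set T :=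
  {y | ∃ x ∈ E, R x y}

def IsSubdist {S : Type*} [Fintype S] (μ : S → ℝ) : Prop :=
  (∀ s, 0 ≤ μ s) ∧ ∑ s, μ s ≤ 1

/-! The row sums of the weight function carry at most `ε` less mass than `μ` on the whole space,
hence also on `E`, since the defect `μ s - ∑ t, δ s t` is nonnegative at every `s`. The rows
indexed by `E` are supported in the columns indexed by `R(E)`, so by the column bound their
total is at most `ν(R(E))`. -/

section Mass

variable {S : Type*} [Fintype S]

@[simp]
theorem mass_univ (μ : S → ℝ) : mass μ Set.univ = ∑ s, μ s := by
  simp [mass]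

theorem mass_sub (μ ρ : S → ℝ) (E : Set S) :
    mass (fun s => μ s - ρ s) E = mass μ E - mass ρ E := by
  simp only [mass, Set.indicator_sub, sum_sub_distrib]

theorem mass_mono {μ ν : S → ℝ} (h : ∀ s, μ s ≤ ν s) (E : Set S) : mass μ E ≤ mass ν E :=
  sum_le_sum fun s _ => Set.indicator_le_indicator (h s)

theorem mass_mono_set {μ : S → ℝ} (hμ : ∀ s, 0 ≤ μ s) {E F : Set S} (hEF : E ⊆ F) :
    mass μ E ≤ mass μ F :=
  sum_le_sum fun s _ => Set.indicator_le_indicator_of_subset hEF hμ s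

theorem mass_sub_mass_le_of_le {μ ρ : S → ℝ} (h : ∀ s, ρ s ≤ μ s) (E : Set S) :
    mass μ E - mass ρ E ≤ mass μ Set.univ - mass ρ Set.univ := by
  rw [← mass_sub, ← mass_sub]
  exact mass_mono_set (fun s => sub_nonneg.mpr (h s)) (Set.subset_univ E)

end Mass

section WeightFunction

variable {S T : Type*} {R : S → T → Prop} {δ : S → T → ℝ}

theorem indicator_sum_apply {ι : Type*} (I : Finset ι) (E : Set S) (f : S → ι → ℝ) (s : S) :
    E.indicator (fun s => ∑ i ∈ I, f s i) s = ∑ i ∈ I, E.indicator (f · i) s := by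
  rw [← sum_fn, indicator_sum, Finset.sum_apply]

theorem indicator_le_indicator_relImage (hδ : ∀ s t, 0 ≤ δ s t)
    (hR : ∀ s t, 0 < δ s t → R s t) (E : Set S) (s : S) (t : T) :
    E.indicator (δ · t) s ≤ (relImage R E).indicator (δ s ·) t := by
  by_cases hs : s ∈ E
  · by_cases ht : t ∈ relImage R E
    · simp [hs, ht]
    · have hnotpos : ¬ 0 < δ s t := fun hpos => ht ⟨s, hs, hR s t hpos⟩
      simpa [hs, ht] using hnotpos
  · simpa [hs] using Set.indicator_nonneg (fun t _ => hδ s t) t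

theorem mass_rowSum_le_mass_colSum_relImage [Fintype S] [Fintype T]
    (hδ : ∀ s t, 0 ≤ δ s t) (hR : ∀ s t, 0 < δ s t → R s t) (E : Set S) :
    mass (fun s => ∑ t, δ s t) E ≤ mass (fun t => ∑ s, δ s t) (relImage R E) := by
  simp only [mass, indicator_sum_apply]
  calc ∑ s, ∑ t, E.indicator (δ · t) s
      ≤ ∑ s, ∑ t, (relImage R E).indicator (δ s ·) t :=
        sum_le_sum fun s _ => sum_le_sum fun t _ => indicator_le_indicator_relImage hδ hR E s t
    _ = ∑ t, ∑ s, (relImage R E).indicator (δ s ·) t := sum_comm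

end WeightFunction

theorem weight_function_implies_lifting_general {S : Type*} [Fintype S]
    (R : S → S → Prop) (μ ν : S → ℝ) (ε : ℝ)
    (δ : S → S → ℝ)
    (hrange : ∀ s t, 0 ≤ δ s t ∧ δ s t ≤ 1)
    (hR : ∀ s t, 0 < δ s t → R s t)
    (hrow : ∀ s, ∑ t, δ s t ≤ μ s)
    (hcol : ∀ t, ∑ s, δ s t ≤ ν t)
    (htot : mass μ Set.univ - ε ≤ ∑ s, ∑ t, δ s t) :
    ∀ E : Set S, mass μ E ≤ mass ν (relImage R E) + ε := by
  intro E
  have hdefect := mass_sub_mass_le_of_le hrow E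
  have hrows := mass_rowSum_le_mass_colSum_relImage (fun s t => (hrange s t).1) hR E
  have hcols := mass_mono hcol (relImage R E)
  simp only [mass_univ] at hdefect htot
  linarith

/-- If there exists an ε-weight function for (μ, ν) with respect to R, then
    μ(E) ≤ ν(R(E)) + ε for every E ⊆ S. -/
theorem weight_function_implies_lifting {S : Type*} [Fintype S]
    (R : S → S → Prop) (μ ν : S → ℝ) (ε : ℝ)
    (hμ : IsSubdist μ) (hν : IsSubdist ν) (hε : 0 ≤ ε)
    (δ : S → S → ℝ)
    (hrange : ∀ s t, 0 ≤ δ s t ∧ δ s t ≤ 1)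
    (hR : ∀ s t, 0 < δ s t → R s t)
    (hrow : ∀ s, ∑ t, δ s t ≤ μ s)
    (hcol : ∀ t, ∑ s, δ s t ≤ ν t)
    (htot : mass μ Set.univ - ε ≤ ∑ s, ∑ t, δ s t) :
    ∀ E : Set S, mass μ E ≤ mass ν (relImage R E) + ε :=
  weight_function_implies_lifting_general R μ ν ε δ hrange hR hrow hcol htot
end

section
/- Let S be a finite set, R ⊆ S × S, μ, ν sub-probability distributions on S, and ε ≥ 0. The relation μ L^ε(R) ν (i.e. for all E ⊆ S, μ(E) ≤ ν(R(E)) + ε) holds if and only if the maximal flow in the network N(μ, ν, R) is at least μ(S) − ε. -/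
open Finset

def Lift {S : Type*} [Fintype S] (ε : ℝ) (R : S → S → Prop) (μ ν : S → ℝ) : Prop :=
  ∀ E : Set S, mass μ E ≤ mass ν (relImage R E) + ε

/-- A flow in the network N(μ, ν, R): `fsrc s` is the flow on the edge (⊥, s),
    `fmid s t` the flow on the edge (s, t') (present iff R s t, capacity 1),
    and `fsnk t` the flow on the edge (t', ⊤). Capacity constraints and flow
    conservation at internal vertices are required. -/
structure NetworkFlow {S : Type*} [Fintype S] (μ ν : S → ℝ) (R : S → S → Prop) where
  fsrc : S → ℝ
  fmid : S → S → ℝ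
  fsnk : S → ℝ
  src_nonneg : ∀ s, 0 ≤ fsrc s
  src_cap : ∀ s, fsrc s ≤ μ s
  mid_nonneg : ∀ s t, 0 ≤ fmid s t
  mid_cap : ∀ s t, fmid s t ≤ 1
  mid_edge : ∀ s t, ¬ R s t → fmid s t = 0
  conserve_left : ∀ s, fsrc s = ∑ t, fmid s t
  conserve_right : ∀ t, ∑ s, fmid s t = fsnk t
  snk_nonneg : ∀ t, 0 ≤ fsnk t
  snk_cap : ∀ t, fsnk t ≤ ν t

/-- The value of the maximal flow in the network N(μ, ν, R). -/
noncomputable def maxFlow {S : Type*} [Fintype S] (μ ν : S → ℝ) (R : S → S → Prop) : ℝ :=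
  sSup {v | ∃ f : NetworkFlow μ ν R, v = ∑ s, f.fsrc s}

/-!
Every `E ⊆ S` determines the cut `{⊥} ∪ E ∪ R(E)'` of `N(μ, ν, R)`, of capacity
`μ(Eᶜ) + ν(R(E))` (no middle edge leaves it), and every flow is bounded by it; this gives `←`.
For `→`, take a maximum flow `f`, which exists by compactness, and let `E` be the set of left
vertices reachable from `⊥` in the residual network. Maximality saturates every reachable `t'`,
since otherwise a small amount of flow could be pushed along a residual walk; hence the cut of
`E` is tight and `μ(S) - ε ≤ μ(Eᶜ) + ν(R(E)) = |f|` by the lift inequality for `E`. The unit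
capacities of the middle edges never bind, because `μ ≤ 1`.
-/

section Cut

variable {S : Type*} [Fintype S]

noncomputable def cutCapacity (μ ν : S → ℝ) (R : S → S → Prop) (E : Set S) : ℝ :=
  mass μ Eᶜ + mass ν (relImage R E)

lemma mass_add_mass_compl (μ : S → ℝ) (E : Set S) :
    mass μ E + mass μ Eᶜ = mass μ Set.univ := by
  simp only [mass, ← Finset.sum_add_distrib, Set.indicator_self_add_compl_apply,
    Set.indicator_univ]

lemma mass_eq_sum_filter (μ : S → ℝ) (E : Set S) [DecidablePred (· ∈ E)] :
    mass μ E = ∑ s with s ∈ E, μ s := by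
  simp [mass, Set.indicator_apply, Finset.sum_filter]

end Cut

namespace NetworkFlow

variable {S : Type*} [Fintype S] {μ ν : S → ℝ} {R : S → S → Prop}

def value (f : NetworkFlow μ ν R) : ℝ := ∑ s, f.fsrc s

lemma value_eq_sum_fmid (f : NetworkFlow μ ν R) : f.value = ∑ s, ∑ t, f.fmid s t :=
  Finset.sum_congr rfl fun s _ => f.conserve_left s

lemma sum_filter_fsrc_eq (f : NetworkFlow μ ν R) (E : Set S) [DecidablePred (· ∈ E)] :
    ∑ s with s ∈ E, f.fsrc s = ∑ t, ∑ s with s ∈ E, f.fmid s t := by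
  rw [Finset.sum_comm]
  exact Finset.sum_congr rfl fun s _ => f.conserve_left s

lemma sum_filter_fmid_eq_zero (f : NetworkFlow μ ν R) {E : Set S} [DecidablePred (· ∈ E)]
    {t : S} (ht : t ∉ relImage R E) : ∑ s with s ∈ E, f.fmid s t = 0 :=
  Finset.sum_eq_zero fun s hs =>
    f.mid_edge s t fun hst => ht ⟨s, (Finset.mem_filter.1 hs).2, hst⟩

lemma value_le_cutCapacity (f : NetworkFlow μ ν R) (E : Set S) :
    f.value ≤ cutCapacity μ ν R E := by
  classical
  have hE : ∑ s with s ∈ E, f.fsrc s ≤ mass ν (relImage R E) := by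
    rw [sum_filter_fsrc_eq, mass]
    refine Finset.sum_le_sum fun t _ => ?_
    by_cases ht : t ∈ relImage R E
    · calc ∑ s with s ∈ E, f.fmid s t ≤ ∑ s, f.fmid s t :=
            Finset.sum_le_sum_of_subset_of_nonneg (Finset.filter_subset _ _)
              fun s _ _ => f.mid_nonneg s t
        _ = f.fsnk t := f.conserve_right t
        _ ≤ _ := by rw [Set.indicator_of_mem ht]; exact f.snk_cap t
    · rw [sum_filter_fmid_eq_zero f ht, Set.indicator_of_notMem ht]
  have hEc : ∑ s with s ∉ E, f.fsrc s ≤ mass μ Eᶜ := by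
    rw [mass_eq_sum_filter]
    exact Finset.sum_le_sum fun s _ => f.src_cap s
  rw [value, cutCapacity, ← Finset.sum_filter_add_sum_filter_not _ (· ∈ E)]
  linarith

lemma range_fmid : Set.range (fmid : NetworkFlow μ ν R → S → S → ℝ) =
    {m | (∀ s t, 0 ≤ m s t) ∧ (∀ s t, m s t ≤ 1) ∧ (∀ s t, ¬ R s t → m s t = 0) ∧
      (∀ s, ∑ t, m s t ≤ μ s) ∧ (∀ t, ∑ s, m s t ≤ ν t)} := by
  ext m
  constructor
  · rintro ⟨f, rfl⟩
    exact ⟨f.mid_nonneg, f.mid_cap, f.mid_edge, fun s => f.conserve_left s ▸ f.src_cap s,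
      fun t => (f.conserve_right t).symm ▸ f.snk_cap t⟩
  · rintro ⟨h0, h1, hR, hμ, hν⟩
    exact ⟨⟨fun s => ∑ t, m s t, m, fun t => ∑ s, m s t,
      fun s => Finset.sum_nonneg fun t _ => h0 s t, hμ, h0, h1, hR, fun _ => rfl, fun _ => rfl,
      fun t => Finset.sum_nonneg fun s _ => h0 s t, hν⟩, rfl⟩

lemma isCompact_range_fmid :
    IsCompact (Set.range (fmid : NetworkFlow μ ν R → S → S → ℝ)) := by
  refine (isCompact_Icc (a := 0) (b := 1)).of_isClosed_subset ?_ ?_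
  · rw [range_fmid]
    simp only [Set.ofPred_and, Set.ofPred_forall]
    refine .inter ?_ (.inter ?_ (.inter ?_ (.inter ?_ ?_))) <;>
      repeat' refine isClosed_iInter fun _ => ?_
    all_goals first
      | exact isClosed_le (by fun_prop) (by fun_prop)
      | exact isClosed_eq (by fun_prop) (by fun_prop)
  · rintro _ ⟨f, rfl⟩
    exact ⟨fun s t => f.mid_nonneg s t, fun s t => f.mid_cap s t⟩

lemma exists_forall_value_le (hμ : ∀ s, 0 ≤ μ s) (hν : ∀ t, 0 ≤ ν t) :
    ∃ f : NetworkFlow μ ν R, ∀ g : NetworkFlow μ ν R, g.value ≤ f.value := by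
  have hne : (Set.range (fmid : NetworkFlow μ ν R → S → S → ℝ)).Nonempty := by
    rw [range_fmid]
    exact ⟨0, fun _ _ => le_rfl, fun _ _ => zero_le_one, fun _ _ _ => rfl,
      fun s => by simpa using hμ s, fun t => by simpa using hν t⟩
  obtain ⟨_, ⟨f, rfl⟩, hmax⟩ := isCompact_range_fmid.exists_isMaxOn hne
    (by fun_prop : Continuous fun m : S → S → ℝ => ∑ s, ∑ t, m s t).continuousOn
  exact ⟨f, fun g => by simpa only [value_eq_sum_fmid] using (hmax ⟨g, rfl⟩ : _ ≤ _)⟩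

lemma maxFlow_eq_value {f : NetworkFlow μ ν R}
    (hf : ∀ g : NetworkFlow μ ν R, g.value ≤ f.value) :
    maxFlow μ ν R = f.value :=
  IsGreatest.csSup_eq ⟨⟨f, rfl⟩, by rintro _ ⟨g, rfl⟩; exact hf g⟩

variable {f : NetworkFlow μ ν R}

/-- Reachability from ⊥ in the residual network of `f`, with `inl s` standing for `s` and
`inr t` for `t'`. Forward middle edges are taken without a capacity check: once `μ ≤ 1`, the
flow through `(s, t')` is bounded by `μ s ≤ 1` anyway. -/
inductive ResidualReachable (f : NetworkFlow μ ν R) : S ⊕ S → Prop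
  | source {s : S} : f.fsrc s < μ s → ResidualReachable f (.inl s)
  | forward {s t : S} : ResidualReachable f (.inl s) → R s t → ResidualReachable f (.inr t)
  | backward {s t : S} : ResidualReachable f (.inr t) → 0 < f.fmid s t →
      ResidualReachable f (.inl s)

section Augment

variable [DecidableEq S]

/-- `d` is the net flow on the middle edges of a residual walk from `s₀` to `v`, the walk
entering `s₀` from ⊥. -/
structure IsResidualWalkFlow (f : NetworkFlow μ ν R) (s₀ : S) (v : S ⊕ S) (d : S → S → ℝ) :
    Prop where
  rel_of_ne_zero : ∀ s t, d s t ≠ 0 → R s t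
  fmid_pos_of_neg : ∀ s t, d s t < 0 → 0 < f.fmid s t
  sum_row : ∀ s, ∑ t, d s t = (if s = s₀ then 1 else 0) - if Sum.inl s = v then 1 else 0
  sum_col : ∀ t, ∑ s, d s t = if Sum.inr t = v then 1 else 0

lemma isResidualWalkFlow_zero (f : NetworkFlow μ ν R) (s₀ : S) :
    IsResidualWalkFlow f s₀ (.inl s₀) 0 where
  rel_of_ne_zero _ _ h := absurd rfl h
  fmid_pos_of_neg _ _ h := absurd h (lt_irrefl 0)
  sum_row s := by simp
  sum_col t := by simp

lemma IsResidualWalkFlow.forward {s₀ s t : S} {d : S → S → ℝ}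
    (hd : IsResidualWalkFlow f s₀ (.inl s) d) (hst : R s t) :
    IsResidualWalkFlow f s₀ (.inr t) fun a b => d a b + if a = s ∧ b = t then 1 else 0 where
  rel_of_ne_zero a b h := by
    by_cases hab : a = s ∧ b = t
    · exact hab.1 ▸ hab.2 ▸ hst
    · exact hd.rel_of_ne_zero a b (by simpa [hab] using h)
  fmid_pos_of_neg a b h := hd.fmid_pos_of_neg a b (by split_ifs at h <;> linarith)
  sum_row a := by
    rw [Finset.sum_add_distrib, hd.sum_row]
    by_cases ha : a = s <;> simp [ha]
  sum_col b := by
    rw [Finset.sum_add_distrib, hd.sum_col]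
    by_cases hb : b = t <;> simp [hb]

lemma IsResidualWalkFlow.backward {s₀ s t : S} {d : S → S → ℝ}
    (hd : IsResidualWalkFlow f s₀ (.inr t) d) (hst : 0 < f.fmid s t) :
    IsResidualWalkFlow f s₀ (.inl s) fun a b => d a b - if a = s ∧ b = t then 1 else 0 where
  rel_of_ne_zero a b h := by
    by_cases hab : a = s ∧ b = t
    · exact hab.1 ▸ hab.2 ▸ by_contra fun hR => hst.ne' (f.mid_edge s t hR)
    · exact hd.rel_of_ne_zero a b (by simpa [hab] using h)
  fmid_pos_of_neg a b h := by
    by_cases hab : a = s ∧ b = t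
    · exact hab.1 ▸ hab.2 ▸ hst
    · exact hd.fmid_pos_of_neg a b (by simpa [hab] using h)
  sum_row a := by
    rw [Finset.sum_sub_distrib, hd.sum_row]
    by_cases ha : a = s <;> simp [ha]
  sum_col b := by
    rw [Finset.sum_sub_distrib, hd.sum_col]
    by_cases hb : b = t <;> simp [hb]

lemma ResidualReachable.exists_isResidualWalkFlow {v : S ⊕ S} (h : f.ResidualReachable v) :
    ∃ s₀, f.fsrc s₀ < μ s₀ ∧ ∃ d, IsResidualWalkFlow f s₀ v d := by
  induction h with
  | source hs => exact ⟨_, hs, 0, isResidualWalkFlow_zero f _⟩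
  | forward _ hst ih =>
    obtain ⟨s₀, hs₀, d, hd⟩ := ih
    exact ⟨s₀, hs₀, _, hd.forward hst⟩
  | backward _ hst ih =>
    obtain ⟨s₀, hs₀, d, hd⟩ := ih
    exact ⟨s₀, hs₀, _, hd.backward hst⟩

open Filter Topology in
lemma exists_value_gt_of_isResidualWalkFlow (hμ1 : ∀ s, μ s ≤ 1) {s₀ t₀ : S}
    {d : S → S → ℝ} (hs₀ : f.fsrc s₀ < μ s₀) (ht₀ : f.fsnk t₀ < ν t₀)
    (hd : IsResidualWalkFlow f s₀ (.inr t₀) d) :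
    ∃ g : NetworkFlow μ ν R, f.value < g.value := by
  -- push a small amount `δ` of flow along the walk, i.e. move from `f.fmid` to `f.fmid + δ • d`
  have hslack : ∀ᶠ δ in 𝓝 (0 : ℝ), f.fsrc s₀ + δ ≤ μ s₀ ∧ f.fsnk t₀ + δ ≤ ν t₀ :=
    ((eventually_lt_nhds (sub_pos.2 hs₀)).and (eventually_lt_nhds (sub_pos.2 ht₀))).mono
      fun δ h => ⟨by linarith [h.1], by linarith [h.2]⟩
  have hmid : ∀ᶠ δ in 𝓝[>] (0 : ℝ), ∀ s t, 0 ≤ f.fmid s t + δ * d s t := by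
    refine eventually_all.2 fun s => eventually_all.2 fun t => ?_
    by_cases hdst : 0 ≤ d s t
    · exact eventually_mem_nhdsWithin.mono fun δ (hδ : 0 < δ) =>
        add_nonneg (f.mid_nonneg s t) (mul_nonneg hδ.le hdst)
    · have hcont : Continuous fun δ : ℝ => f.fmid s t + δ * d s t := by fun_prop
      refine nhdsWithin_le_nhds ((hcont.tendsto 0).eventually (lt_mem_nhds ?_) |>.mono
        fun _ h => h.le)
      simpa using hd.fmid_pos_of_neg s t (not_le.1 hdst)
  obtain ⟨δ, hδ : 0 < δ, ⟨hsrc, hsnk⟩, hmid⟩ :=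
    (eventually_mem_nhdsWithin.and ((hslack.filter_mono nhdsWithin_le_nhds).and hmid)).exists
  have hrow : ∀ a, f.fsrc a + (if a = s₀ then δ else 0) = ∑ b, (f.fmid a b + δ * d a b) := by
    intro a
    rw [Finset.sum_add_distrib, ← Finset.mul_sum, hd.sum_row, ← f.conserve_left]
    by_cases ha : a = s₀ <;> simp [ha]
  have hcol : ∀ b, ∑ a, (f.fmid a b + δ * d a b) = f.fsnk b + if b = t₀ then δ else 0 := by
    intro b
    rw [Finset.sum_add_distrib, ← Finset.mul_sum, hd.sum_col, f.conserve_right]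
    by_cases hb : b = t₀ <;> simp [hb]
  have hsrc_cap : ∀ a, f.fsrc a + (if a = s₀ then δ else 0) ≤ μ a := by
    intro a
    split_ifs with ha
    · exact ha ▸ hsrc
    · simpa using f.src_cap a
  refine ⟨⟨_, _, _, fun a => add_nonneg (f.src_nonneg a) (by split_ifs <;> positivity),
    hsrc_cap, hmid, fun a b => ?_, fun a b hab => ?_, hrow, hcol,
    fun b => add_nonneg (f.snk_nonneg b) (by split_ifs <;> positivity), fun b => ?_⟩, ?_⟩
  · calc f.fmid a b + δ * d a b ≤ ∑ b, (f.fmid a b + δ * d a b) :=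
          Finset.single_le_sum (fun b _ => hmid a b) (Finset.mem_univ b)
      _ ≤ 1 := (hrow a ▸ hsrc_cap a).trans (hμ1 a)
  · have hdab : d a b = 0 := by_contra fun h => hab (hd.rel_of_ne_zero a b h)
    rw [f.mid_edge a b hab, hdab, mul_zero, add_zero]
  · split_ifs with hb
    · exact hb ▸ hsnk
    · simpa using f.snk_cap b
  · simp only [value, Finset.sum_add_distrib, Finset.sum_ite_eq', Finset.mem_univ, if_true]
    linarith

end Augment

lemma fsnk_eq_of_residualReachable (hμ1 : ∀ s, μ s ≤ 1)
    (hf : ∀ g : NetworkFlow μ ν R, g.value ≤ f.value) {t : S}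
    (ht : f.ResidualReachable (.inr t)) : f.fsnk t = ν t := by
  classical
  obtain ⟨s₀, hs₀, d, hd⟩ := ht.exists_isResidualWalkFlow
  by_contra hne
  obtain ⟨g, hg⟩ :=
    exists_value_gt_of_isResidualWalkFlow hμ1 hs₀ ((f.snk_cap t).lt_of_ne hne) hd
  exact (hg.trans_le (hf g)).false

lemma exists_value_eq_cutCapacity (hμ1 : ∀ s, μ s ≤ 1)
    (hf : ∀ g : NetworkFlow μ ν R, g.value ≤ f.value) :
    ∃ E, f.value = cutCapacity μ ν R E := by
  classical
  set E := {s | f.ResidualReachable (.inl s)}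
  have hRE : ∀ {t}, t ∈ relImage R E → f.ResidualReachable (.inr t) :=
    fun ⟨_, hs, hst⟩ => .forward hs hst
  have hE : ∑ s with s ∈ E, f.fsrc s = mass ν (relImage R E) := by
    rw [sum_filter_fsrc_eq, mass]
    refine Finset.sum_congr rfl fun t _ => ?_
    by_cases ht : t ∈ relImage R E
    · rw [Set.indicator_of_mem ht, ← fsnk_eq_of_residualReachable hμ1 hf (hRE ht),
        ← f.conserve_right]
      exact Finset.sum_filter_of_ne fun s _ hst =>
        .backward (hRE ht) ((f.mid_nonneg s t).lt_of_ne' hst)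
    · rw [sum_filter_fmid_eq_zero f ht, Set.indicator_of_notMem ht]
  have hEc : ∑ s with s ∉ E, f.fsrc s = mass μ Eᶜ := by
    rw [mass_eq_sum_filter]
    exact Finset.sum_congr rfl fun s hs => by_contra fun hne =>
      (Finset.mem_filter.1 hs).2 (.source ((f.src_cap s).lt_of_ne hne))
  refine ⟨E, ?_⟩
  rw [value, cutCapacity, ← Finset.sum_filter_add_sum_filter_not _ (· ∈ E), hE, hEc, add_comm]

end NetworkFlow

theorem lift_iff_maxflow_general {S : Type*} [Fintype S]
    (R : S → S → Prop) (μ ν : S → ℝ) (ε : ℝ)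
    (hμ : IsSubdist μ) (hν : IsSubdist ν) :
    Lift ε R μ ν ↔ mass μ Set.univ - ε ≤ maxFlow μ ν R := by
  have hμ1 : ∀ s, μ s ≤ 1 := fun s =>
    (Finset.single_le_sum (fun a _ => hμ.1 a) (Finset.mem_univ s)).trans hμ.2
  obtain ⟨f, hf⟩ := NetworkFlow.exists_forall_value_le (R := R) hμ.1 hν.1
  rw [NetworkFlow.maxFlow_eq_value hf]
  constructor
  · intro hlift
    obtain ⟨E, hE⟩ := NetworkFlow.exists_value_eq_cutCapacity hμ1 hf
    have hsplit := mass_add_mass_compl μ E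
    rw [hE, cutCapacity]
    linarith [hlift E]
  · intro hflow E
    have hcut := f.value_le_cutCapacity E
    have hsplit := mass_add_mass_compl μ E
    rw [cutCapacity] at hcut
    linarith

/-- μ L^ε(R) ν iff the maximal flow in N(μ, ν, R) is at least μ(S) − ε. -/
theorem lift_iff_maxflow {S : Type*} [Fintype S]
    (R : S → S → Prop) (μ ν : S → ℝ) (ε : ℝ)
    (hμ : IsSubdist μ) (hν : IsSubdist ν) (hε : 0 ≤ ε) :
    Lift ε R μ ν ↔ mass μ Set.univ - ε ≤ maxFlow μ ν R :=
  lift_iff_maxflow_general R μ ν ε hμ hν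
end

section
/- There exists a finite probabilistic automaton and states s, t such that s ≺^{prio} t (a priori 0-simulation) but not s ≺ t (0-simulation). Concretely, the automaton of Example with states s, s₁, s₂, s₃ where s has one a-transition μ with μ(s₁)=1/3, μ(s₂)=1/4, μ(s₃)=5/12, each sᵢ has a bᵢ-transition with probability 1, and t has three a-transitions ν₁, ν₂, ν₃ to states t₁, t₂, t₃ (each tᵢ having a bᵢ-transition with probability 1) with ν₁=(7/24,7/24,5/12), ν₂=(3/8,1/4,3/8), ν₃=(1/3,1/3,1/3), witnesses this separation. -/
/-!
Put sᵢ in relation with tᵢ (and s with t). For a fixed set E the a priori condition lets t pick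
its a-transition after seeing E: ν₁ covers every E ∌ s₁, ν₃ every E ∋ s₁ with s₃ ∉ E, and ν₂
the remaining sets, the tight one being {s₁, s₃} with 1/3 + 5/12 = 3/8 + 3/8.

A 0-simulation must instead fix one ν for all E. Among the a-successors of t only tᵢ can do bᵢ,
so ν has to give mass at least μ(s₁) = 1/3 to t₁ and at least μ(s₃) = 5/12 to t₃; ν₁ fails the
first test and ν₂, ν₃ the second.
-/

open Finset

def IsEpsSim {S Act : Type*} [Fintype S] (D : S → Act → (S → ℝ) → Prop) (ε : ℝ)
    (R : S → S → Prop) : Prop :=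
  ∀ s t, R s t → ∀ a μ, D s a μ → ∃ ν, D t a ν ∧ Lift ε R μ ν

def IsPrioSim {S Act : Type*} [Fintype S] (D : S → Act → (S → ℝ) → Prop) (ε : ℝ)
    (R : S → S → Prop) : Prop :=
  ∀ s t, R s t → ∀ a μ, D s a μ → ∀ E : Set S,
    ∃ ν, D t a ν ∧ mass μ E ≤ mass ν (relImage R E) + ε

namespace PrioExample

inductive St where
  | s | s1 | s2 | s3 | s4 | s5 | s6
  | t | t1 | t2 | t3 | t4 | t5 | t6
  deriving DecidableEq

instance : Fintype St :=
  Fintype.ofList [.s, .s1, .s2, .s3, .s4, .s5, .s6, .t, .t1, .t2, .t3, .t4, .t5, .t6]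
    (by intro x; cases x <;> simp)

inductive Act where
  | a | b1 | b2 | b3
  deriving DecidableEq

instance : Fintype Act :=
  Fintype.ofList [.a, .b1, .b2, .b3] (by intro x; cases x <;> simp)

open St Act

noncomputable def dirac (x : St) : St → ℝ := fun y => if y = x then 1 else 0

noncomputable def muS : St → ℝ := fun x =>
  match x with
  | .s1 => 1/3 | .s2 => 1/4 | .s3 => 5/12 | _ => 0

noncomputable def nu1 : St → ℝ := fun x =>
  match x with
  | .t1 => 7/24 | .t2 => 7/24 | .t3 => 5/12 | _ => 0

noncomputable def nu2 : St → ℝ := fun x =>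
  match x with
  | .t1 => 3/8 | .t2 => 1/4 | .t3 => 3/8 | _ => 0

noncomputable def nu3 : St → ℝ := fun x =>
  match x with
  | .t1 => 1/3 | .t2 => 1/3 | .t3 => 1/3 | _ => 0

noncomputable def D : St → Act → (St → ℝ) → Prop := fun x act μ =>
  match x, act with
  | .s, .a => μ = muS
  | .t, .a => μ = nu1 ∨ μ = nu2 ∨ μ = nu3
  | .s1, .b1 => μ = dirac .s4
  | .s2, .b2 => μ = dirac .s5
  | .s3, .b3 => μ = dirac .s6
  | .t1, .b1 => μ = dirac .t4
  | .t2, .b2 => μ = dirac .t5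
  | .t3, .b3 => μ = dirac .t6
  | _, _ => False

end PrioExample

section Mass

variable {S : Type*} [Fintype S]

lemma mass_mono_s11 {μ : S → ℝ} (hμ : ∀ x, 0 ≤ μ x) {E F : Set S} (hEF : E ⊆ F) :
    mass μ E ≤ mass μ F :=
  Finset.sum_le_sum fun x _ => Set.indicator_le_indicator_of_subset hEF hμ x

lemma mass_singleton (μ : S → ℝ) (x : S) : mass μ {x} = μ x := by
  classical
  simp [mass, Set.indicator_apply]

lemma mass_eq_sum_of_support_subset {μ : S → ℝ} (A : Finset S) (hA : ∀ x ∉ A, μ x = 0)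
    (E : Set S) : mass μ E = ∑ x ∈ A, E.indicator μ x :=
  (Finset.sum_subset (Finset.subset_univ A) fun x _ hx => by simp [hA x hx]).symm

end Mass

section EpsSim

variable {S Act : Type*} [Fintype S] {D : S → Act → (S → ℝ) → Prop} {ε : ℝ}
  {R : S → S → Prop}

lemma IsEpsSim.relImage_singleton_subset (hR : IsEpsSim D ε R) {x : S} {a : Act}
    {μ : S → ℝ} (hx : D x a μ) : relImage R {x} ⊆ {y | ∃ ν, D y a ν} := by
  rintro y ⟨x', rfl, hxy⟩
  obtain ⟨ν, hν, -⟩ := hR x' y hxy a μ hx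
  exact ⟨ν, hν⟩

lemma IsEpsSim.le_mass_enabled_of_lift (hR : IsEpsSim D ε R) {μ ν : S → ℝ}
    (hlift : Lift ε R μ ν) (hν : ∀ y, 0 ≤ ν y) {x : S} {b : Act} {ρ : S → ℝ}
    (hx : D x b ρ) : μ x ≤ mass ν {y | ∃ ρ', D y b ρ'} + ε :=
  calc μ x = mass μ {x} := (mass_singleton μ x).symm
    _ ≤ mass ν (relImage R {x}) + ε := hlift {x}
    _ ≤ mass ν {y | ∃ ρ', D y b ρ'} + ε := by
      gcongr
      exact mass_mono_s11 hν (hR.relImage_singleton_subset hx)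

end EpsSim

namespace PrioExample

open St Act

lemma nonneg_of_D_t_a {ν : St → ℝ} (hν : D t a ν) (x : St) : 0 ≤ ν x := by
  rcases hν with rfl | rfl | rfl <;> cases x <;> norm_num [nu1, nu2, nu3]

lemma mass_of_D_t_a {ν : St → ℝ} (hν : D t a ν) (E : Set St) :
    mass ν E = E.indicator ν t1 + E.indicator ν t2 + E.indicator ν t3 := by
  rw [mass_eq_sum_of_support_subset {t1, t2, t3}]
  · simp [add_assoc]
  · intro x hx
    rcases hν with rfl | rfl | rfl <;> cases x <;> simp_all [nu1, nu2, nu3]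

lemma mass_muS (E : Set St) :
    mass muS E = E.indicator muS s1 + E.indicator muS s2 + E.indicator muS s3 := by
  rw [mass_eq_sum_of_support_subset {s1, s2, s3}]
  · simp [add_assoc]
  · intro x hx
    cases x <;> simp_all [muS]

lemma mass_dirac (x : St) (E : Set St) : mass (dirac x) E = E.indicator 1 x := by
  rw [mass_eq_sum_of_support_subset {x} (fun y hy => by simp_all [dirac])]
  by_cases hx : x ∈ E <;> simp [hx, dirac]

lemma mass_dirac_le_of_rel {R : St → St → Prop} {x y : St} (hxy : R x y) (E : Set St) :
    mass (dirac x) E ≤ mass (dirac y) (relImage R E) := by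
  rw [mass_dirac, mass_dirac]
  by_cases hx : x ∈ E
  · simp [hx, show y ∈ relImage R E from ⟨x, hx, hxy⟩]
  · simp [hx, Set.indicator_nonneg]

inductive Twin : St → St → Prop
  | root : Twin s t
  | mid1 : Twin s1 t1
  | mid2 : Twin s2 t2
  | mid3 : Twin s3 t3
  | leaf4 : Twin s4 t4
  | leaf5 : Twin s5 t5
  | leaf6 : Twin s6 t6

lemma mem_relImage_twin_iff {x y : St} (hxy : Twin x y) (E : Set St) :
    y ∈ relImage Twin E ↔ x ∈ E := by
  refine ⟨fun ⟨x', hx', hx'y⟩ => ?_, fun hx => ⟨x, hx, hxy⟩⟩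
  cases hxy <;> cases hx'y <;> exact hx'

lemma exists_D_t_a_mass_ge (E : Set St) :
    ∃ ν, D t a ν ∧ mass muS E ≤ mass ν (relImage Twin E) := by
  classical
  have h₁ : D t a nu1 := .inl rfl
  have h₂ : D t a nu2 := .inr (.inl rfl)
  have h₃ : D t a nu3 := .inr (.inr rfl)
  refine ⟨if s1 ∈ E then if s3 ∈ E then nu2 else nu3 else nu1, by split_ifs <;> assumption, ?_⟩
  by_cases hs1 : s1 ∈ E <;> by_cases hs2 : s2 ∈ E <;> by_cases hs3 : s3 ∈ E <;>
    norm_num [mass_muS, mass_of_D_t_a h₁, mass_of_D_t_a h₂, mass_of_D_t_a h₃,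
      mem_relImage_twin_iff .mid1, mem_relImage_twin_iff .mid2, mem_relImage_twin_iff .mid3,
      hs1, hs2, hs3, muS, nu1, nu2, nu3]

lemma isPrioSim_twin : IsPrioSim D 0 Twin := by
  intro x y hxy b μ hμ E
  simp only [add_zero]
  cases hxy <;> cases b <;> simp only [D] at hμ ⊢ <;> subst hμ
  · exact exists_D_t_a_mass_ge E
  · exact ⟨_, rfl, mass_dirac_le_of_rel .leaf4 E⟩
  · exact ⟨_, rfl, mass_dirac_le_of_rel .leaf5 E⟩
  · exact ⟨_, rfl, mass_dirac_le_of_rel .leaf6 E⟩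

lemma not_rel_s_t_of_isEpsSim {R : St → St → Prop} (hR : IsEpsSim D 0 R) : ¬ R s t := by
  intro hst
  obtain ⟨ν, hν, hlift⟩ := hR s t hst a muS rfl
  have hb1 := hR.le_mass_enabled_of_lift hlift (nonneg_of_D_t_a hν)
    (show D s1 b1 (dirac s4) from rfl)
  have hb3 := hR.le_mass_enabled_of_lift hlift (nonneg_of_D_t_a hν)
    (show D s3 b3 (dirac s6) from rfl)
  simp only [muS, one_div, D, mass_of_D_t_a hν, Set.mem_ofPred_eq, exists_eq,
    Set.indicator_of_mem, exists_const, not_false_eq_true, Set.indicator_of_notMem, add_zero,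
    zero_add] at hb1 hb3
  rcases hν with rfl | rfl | rfl
  · norm_num [nu1] at hb1
  · norm_num [nu2] at hb3
  · norm_num [nu3] at hb3

/-- In this automaton s is a-priori-0-simulated by t, but not 0-simulated. -/
theorem prio_strictly_weaker :
    (∃ R : St → St → Prop, IsPrioSim D 0 R ∧ R .s .t) ∧
    ¬ (∃ R : St → St → Prop, IsEpsSim D 0 R ∧ R .s .t) :=
  ⟨⟨Twin, isPrioSim_twin, .root⟩, fun ⟨_, hR, hst⟩ => not_rel_s_t_of_isEpsSim hR hst⟩

end PrioExample
end

section
/- For a finite, finitely branching probabilistic automaton, the pseudo-metric d(s,t) = inf { ε | s ∼_ε t } satisfies: d(s,t) = 0 if and only if s and t are bisimilar (0-bisimilar). -/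
open Finset

/-- s ∼_ε t: some symmetric ε-simulation (i.e. ε-bisimulation) relates s and t. -/
def Bisim {S Act : Type*} [Fintype S] (D : S → Act → (S → ℝ) → Prop) (ε : ℝ)
    (s t : S) : Prop :=
  ∃ R : S → S → Prop, IsEpsSim D ε R ∧ (∀ x y, R x y → R y x) ∧ R s t

open scoped Classical in
/-- d(s,t) = inf { ε ∈ [0,1] | s ∼_ε t }, with d(s,t) = 1 if no such ε exists. -/
noncomputable def pdist {S Act : Type*} [Fintype S]
    (D : S → Act → (S → ℝ) → Prop) (s t : S) : ℝ :=
  if ∃ ε ∈ Set.Icc (0:ℝ) 1, Bisim D ε s t then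
    sInf {ε | ε ∈ Set.Icc (0:ℝ) 1 ∧ Bisim D ε s t}
  else 1

/-!
If `d(s,t) = 0` then `s ∼_δ t` for every `δ > 0`. There are only finitely many relations on the
finite state space, so a single symmetric relation `R ∋ (s,t)` witnesses `s ∼_δ t` for arbitrarily
small `δ`, hence (by monotonicity in `δ`) for all `δ > 0`. By the same pigeonhole argument over the
finitely many `a`-transitions of a state, when `u R v` each transition of `u` has one matching
transition of `v` that works for all `δ > 0`; letting `δ → 0` shows that `R` is a `0`-bisimulation.
-/

open Topology

theorem Set.Finite.exists_mem_forall_pos {α : Type*} {N : Set α} (hN : N.Finite)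
    {P : ℝ → α → Prop} (hP : ∀ ν, Monotone (P · ν)) (h : ∀ δ > 0, ∃ ν ∈ N, P δ ν) :
    ∃ ν ∈ N, ∀ δ > 0, P δ ν := by
  have hfreq : ∃ᶠ δ in 𝓝[>] (0 : ℝ), ∃ ν ∈ N, P δ ν :=
    Filter.Eventually.frequently <| eventually_mem_nhdsWithin.mono fun δ hδ => h δ hδ
  obtain ⟨ν, hνN, hν⟩ := hN.frequently_exists.mp hfreq
  refine ⟨ν, hνN, fun δ hδ => ?_⟩
  obtain ⟨δ', hPδ', hδ'δ⟩ := (hν.and_eventually (Ioo_mem_nhdsGT hδ)).exists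
  exact hP ν hδ'δ.2.le hPδ'

section

variable {S Act : Type*} [Fintype S] {D : S → Act → (S → ℝ) → Prop}

theorem Lift.mono {ε ε' : ℝ} (h : ε ≤ ε') {R : S → S → Prop} {μ ν : S → ℝ}
    (hl : Lift ε R μ ν) : Lift ε' R μ ν := fun E =>
  (hl E).trans (by linarith)

theorem lift_zero_of_forall_pos {R : S → S → Prop} {μ ν : S → ℝ}
    (h : ∀ δ > 0, Lift δ R μ ν) : Lift 0 R μ ν := fun E => by
  rw [add_zero]
  exact le_of_forall_pos_le_add fun δ hδ => h δ hδ E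

theorem IsEpsSim.mono {ε ε' : ℝ} (h : ε ≤ ε') {R : S → S → Prop}
    (hR : IsEpsSim D ε R) : IsEpsSim D ε' R := fun s t hst a μ hμ =>
  (hR s t hst a μ hμ).imp fun _ hν => ⟨hν.1, hν.2.mono h⟩

theorem Bisim.mono {ε ε' : ℝ} (h : ε ≤ ε') {s t : S} (hst : Bisim D ε s t) : Bisim D ε' s t :=
  hst.imp fun _ hR => ⟨hR.1.mono h, hR.2⟩

theorem isEpsSim_zero_of_forall_pos (hfb : ∀ s a, {μ | D s a μ}.Finite) {R : S → S → Prop}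
    (hR : ∀ δ > 0, IsEpsSim D δ R) : IsEpsSim D 0 R := by
  intro s t hst a μ hμ
  obtain ⟨ν, hν, hlift⟩ := (hfb t a).exists_mem_forall_pos (fun _ _ _ hle h => h.mono hle)
    fun δ hδ => hR δ hδ s t hst a μ hμ
  exact ⟨ν, hν, lift_zero_of_forall_pos hlift⟩

theorem bisim_zero_of_forall_pos (hfb : ∀ s a, {μ | D s a μ}.Finite) {s t : S}
    (h : ∀ δ > 0, Bisim D δ s t) : Bisim D 0 s t := by
  obtain ⟨R, -, hR⟩ := Set.finite_univ.exists_mem_forall_pos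
    (P := fun δ R => IsEpsSim D δ R ∧ (∀ x y, R x y → R y x) ∧ R s t)
    (fun _ _ _ hle hR => ⟨hR.1.mono hle, hR.2⟩)
    fun δ hδ => (h δ hδ).imp fun _ hR => ⟨trivial, hR⟩
  exact ⟨R, isEpsSim_zero_of_forall_pos hfb fun δ hδ => (hR δ hδ).1, (hR 1 one_pos).2⟩

theorem pdist_eq_zero_iff_forall_pos {s t : S} :
    pdist D s t = 0 ↔ ∀ δ > 0, Bisim D δ s t := by
  unfold pdist
  constructor
  · intro h δ hδ
    split_ifs at h with hex
    · obtain ⟨ε₀, hε₀⟩ := hex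
      obtain ⟨ε, hεA, hεδ⟩ := exists_lt_of_csInf_lt ⟨ε₀, hε₀⟩ (h ▸ hδ)
      exact hεA.2.mono hεδ.le
    · exact absurd h one_ne_zero
  · intro h
    have h1 : (1 : ℝ) ∈ Set.Icc 0 1 ∧ Bisim D 1 s t :=
      ⟨Set.right_mem_Icc.mpr zero_le_one, h 1 one_pos⟩
    rw [if_pos ⟨1, h1⟩]
    refine csInf_eq_of_forall_ge_of_forall_gt_exists_lt ⟨1, h1⟩ (fun ε hε => hε.1.1)
      fun w hw => ?_
    refine ⟨min w 1 / 2, ⟨⟨by positivity, ?_⟩, h _ (by positivity)⟩, ?_⟩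
    · linarith [min_le_right w 1]
    · linarith [min_le_left w 1]

end

theorem pdist_eq_zero_iff_bisim_general {S Act : Type*} [Fintype S]
    (D : S → Act → (S → ℝ) → Prop)
    (hfb : ∀ s a, {μ | D s a μ}.Finite) :
    ∀ s t : S, pdist D s t = 0 ↔ Bisim D 0 s t := fun s t => by
  rw [pdist_eq_zero_iff_forall_pos]
  exact ⟨bisim_zero_of_forall_pos hfb, fun h δ hδ => h.mono hδ.le⟩

/-- d(s,t) = 0 iff s and t are 0-bisimilar. -/
theorem pdist_eq_zero_iff_bisim {S Act : Type*} [Fintype S]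
    (D : S → Act → (S → ℝ) → Prop)
    (hD : ∀ s a μ, D s a μ → IsSubdist μ)
    (hfb : ∀ s a, {μ | D s a μ}.Finite) :
    ∀ s t : S, pdist D s t = 0 ↔ Bisim D 0 s t :=
  pdist_eq_zero_iff_bisim_general D hfb
end

section
/- For the logic L^N with relaxed semantics, for every formula φ and every ε ∈ ℚ there is a formula φ_ε (defined by structural induction: ⊤_ε = ⊤, (φ₁∧φ₂)_ε = (φ₁)_ε ∧ (φ₂)_ε, (φ₁∨φ₂)_ε = (φ₁)_ε ∨ (φ₂)_ε, (⟨a⟩{(φᵢ,pᵢ)}ᵢ)_ε = ⟨a⟩{((φᵢ)_ε, pᵢ−ε)}ᵢ, allowing thresholds outside [0,1]) such that ⟦φ⟧_ε = ⟦φ_ε⟧₀, and moreover (φ_ε)_{ε'} = φ_{ε+ε'}. -/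
open Finset

/-- Formulas of the logic L^N:
    φ ::= ⊤ | φ ∧ φ | φ ∨ φ | ⟨a⟩{(φᵢ, pᵢ)}ᵢ (I finite, pᵢ ∈ ℚ). -/
inductive LN (Act : Type*) where
  | top : LN Act
  | and : LN Act → LN Act → LN Act
  | or : LN Act → LN Act → LN Act
  | dia : Act → List (LN Act × ℚ) → LN Act

/-- The relaxed ε-semantics of L^N. -/
noncomputable def Sat {S Act : Type*} [Fintype S] (D : S → Act → (S → ℝ) → Prop)
    (ε : ℝ) : LN Act → S → Prop
  | .top, _ => True
  | .and φ ψ, s => Sat D ε φ s ∧ Sat D ε ψ s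
  | .or φ ψ, s => Sat D ε φ s ∨ Sat D ε ψ s
  | .dia a l, s => ∃ μ, D s a μ ∧
      ∀ p ∈ l, (p.2 : ℝ) - ε ≤ mass μ {x | Sat D ε p.1 x}
  decreasing_by
    all_goals simp_wf
    all_goals try omega
    have h := List.sizeOf_lt_of_mem ‹p ∈ l›
    obtain ⟨f, q⟩ := p
    simp only [Prod.mk.sizeOf_spec] at h
    simp only []
    omega

/-- The translation φ ↦ φ_ε: thresholds are shifted down by ε
    (and are allowed to leave [0,1]). -/
def transl {Act : Type*} (ε : ℚ) : LN Act → LN Act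
  | .top => .top
  | .and φ ψ => .and (transl ε φ) (transl ε ψ)
  | .or φ ψ => .or (transl ε φ) (transl ε ψ)
  | .dia a l => .dia a (l.attach.map fun p => (transl ε p.1.1, p.1.2 - ε))
  decreasing_by
    all_goals simp_wf
    all_goals try omega
    have h := List.sizeOf_lt_of_mem p.2
    obtain ⟨⟨f, q⟩, hp⟩ := p
    simp only [Prod.mk.sizeOf_spec] at h ⊢
    omega

/-! Shifting every threshold of `φ` down by `ε` has the same effect as loosening every
probability constraint by `ε`: in the diamond case `p - (δ + ε) = (p - ε) - δ`, and the
induction hypothesis identifies the sets whose masses are compared. -/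

@[induction_eliminator]
theorem LN.induction {Act : Type*} {motive : LN Act → Prop} (top : motive .top)
    (and : ∀ φ ψ, motive φ → motive ψ → motive (.and φ ψ))
    (or : ∀ φ ψ, motive φ → motive ψ → motive (.or φ ψ))
    (dia : ∀ a l, (∀ p ∈ l, motive p.1) → motive (.dia a l)) (φ : LN Act) : motive φ :=
  LN.rec (motive_2 := fun l => ∀ p ∈ l, motive p.1) (motive_3 := fun p => motive p.1)
    top and or dia (fun _ h => nomatch h)
    (fun _ _ hp hl => List.forall_mem_cons.2 ⟨hp, hl⟩) (fun _ _ h => h) φ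

theorem transl_dia {Act : Type*} (ε : ℚ) (a : Act) (l : List (LN Act × ℚ)) :
    transl ε (.dia a l) = .dia a (l.map fun p => (transl ε p.1, p.2 - ε)) := by
  simp only [transl, List.map_attach_eq_pmap, List.pmap_eq_map]

theorem transl_transl {Act : Type*} (ε ε' : ℚ) (φ : LN Act) :
    transl ε' (transl ε φ) = transl (ε + ε') φ := by
  induction φ with
  | top => simp only [transl]
  | and φ ψ ihφ ihψ => simp only [transl, ihφ, ihψ]
  | or φ ψ ihφ ihψ => simp only [transl, ihφ, ihψ]
  | dia a l ih =>
    simp only [transl_dia, List.map_map, LN.dia.injEq, true_and]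
    refine List.map_congr_left fun p hp => ?_
    simp only [Function.comp_apply, ih p hp, sub_sub]

theorem sat_transl_iff {S Act : Type*} [Fintype S] (D : S → Act → (S → ℝ) → Prop) (δ : ℝ)
    (ε : ℚ) (φ : LN Act) (s : S) : Sat D δ (transl ε φ) s ↔ Sat D (δ + ε) φ s := by
  induction φ generalizing s with
  | top => simp only [transl, Sat]
  | and φ ψ ihφ ihψ => simp only [transl, Sat, ihφ, ihψ]
  | or φ ψ ihφ ihψ => simp only [transl, Sat, ihφ, ihψ]
  | dia a l ih =>
    simp only [transl_dia, Sat.eq_4, List.forall_mem_map]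
    refine exists_congr fun μ => and_congr_right fun _ => forall₂_congr fun p hp => ?_
    rw [Set.ext (ih p hp), Rat.cast_sub, sub_sub, add_comm δ]

/-- ⟦φ⟧_ε = ⟦φ_ε⟧₀, and the translation is additive: (φ_ε)_{ε'} = φ_{ε+ε'}. -/
theorem transl_correct {S Act : Type*} [Fintype S]
    (D : S → Act → (S → ℝ) → Prop) :
    (∀ (ε : ℚ) (φ : LN Act) (s : S),
      Sat D (ε : ℝ) φ s ↔ Sat D 0 (transl ε φ) s) ∧
    (∀ (ε ε' : ℚ) (φ : LN Act), transl ε' (transl ε φ) = transl (ε + ε') φ) :=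
  ⟨fun ε φ s => by rw [sat_transl_iff, zero_add], transl_transl⟩
end

section
/- Non-expansiveness of parallel composition under synchronous product of distributions: let S₁, S₂, S be finite sets, μ₁ ∈ Sub(S₁), μ₂ ∈ Sub(S₂), ν ∈ Sub(S), R ⊆ S₁ × S₂ and ε ≥ 0 with μ₁ L^ε(R) μ₂. Define R' ⊆ (S₁×S) × (S₂×S) by (x,u) R' (y,v) iff x R y and u = v. Then (μ₁ ⊗ ν) L^ε(R') (μ₂ ⊗ ν), where (μ ⊗ ν)(x,u) = μ(x)·ν(u). -/
open Finset

/-- The lifting of a relation between two (possibly different) finite sets. -/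
def Lift2 {S T : Type*} [Fintype S] [Fintype T] (ε : ℝ) (R : S → T → Prop)
    (μ : S → ℝ) (ν : T → ℝ) : Prop :=
  ∀ E : Set S, mass μ E ≤ mass ν (relImage R E) + ε

/-- The independent product of sub-distributions. -/
noncomputable def prodDist {S T : Type*} (μ : S → ℝ) (ν : T → ℝ) : S × T → ℝ :=
  fun p => μ p.1 * ν p.2

/-! The mass of `E` under `μ ⊗ ν` is the `ν`-average of the `μ`-masses of the sections of `E`;
the image of `E` under the synchronised relation has as sections the `R`-images of those
sections, so the hypothesis applies section by section and the errors `ε` average to at most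
`ε` because `ν` has total mass at most one. -/

theorem mass_prodDist {S T : Type*} [Fintype S] [Fintype T] (μ : S → ℝ) (ν : T → ℝ)
    (E : Set (S × T)) :
    mass (prodDist μ ν) E = ∑ u, ν u * mass μ ((·, u) ⁻¹' E) := by
  classical
  unfold mass
  rw [Fintype.sum_prod_type_right]
  refine sum_congr rfl fun u _ => ?_
  rw [mul_sum]
  refine sum_congr rfl fun x _ => ?_
  by_cases hx : (x, u) ∈ E <;> simp [Set.indicator_of_mem, Set.indicator_of_notMem, hx, prodDist,
    mul_comm]

theorem preimage_relImage_sync {S₁ S₂ S : Type*} (R : S₁ → S₂ → Prop) (E : Set (S₁ × S))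
    (u : S) :
    (·, u) ⁻¹' relImage (fun (p : S₁ × S) (q : S₂ × S) => R p.1 q.1 ∧ p.2 = q.2) E =
      relImage R ((·, u) ⁻¹' E) := by
  ext y
  constructor
  · rintro ⟨⟨x, _⟩, hxE, hR, rfl⟩
    exact ⟨x, hxE, hR⟩
  · rintro ⟨x, hxE, hR⟩
    exact ⟨(x, u), hxE, hR, rfl⟩

theorem sum_mul_le_sum_mul_add_of_le_add {ι : Type*} [Fintype ι] {w a b : ι → ℝ} {ε : ℝ}
    (hw : ∀ i, 0 ≤ w i) (hw_sum : ∑ i, w i ≤ 1) (hε : 0 ≤ ε) (hab : ∀ i, a i ≤ b i + ε) :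
    ∑ i, w i * a i ≤ ∑ i, w i * b i + ε :=
  calc ∑ i, w i * a i
      ≤ ∑ i, w i * (b i + ε) := sum_le_sum fun i _ => mul_le_mul_of_nonneg_left (hab i) (hw i)
    _ = ∑ i, w i * b i + (∑ i, w i) * ε := by simp only [mul_add, sum_add_distrib, sum_mul]
    _ ≤ ∑ i, w i * b i + ε := by
        gcongr
        exact mul_le_of_le_one_left hε hw_sum

theorem lift_prod_general {S₁ S₂ S : Type*} [Fintype S₁] [Fintype S₂] [Fintype S]
    (μ₁ : S₁ → ℝ) (μ₂ : S₂ → ℝ) (ν : S → ℝ)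
    (hν : IsSubdist ν)
    (R : S₁ → S₂ → Prop) (ε : ℝ) (hε : 0 ≤ ε)
    (h : Lift2 ε R μ₁ μ₂) :
    Lift2 ε (fun (p : S₁ × S) (q : S₂ × S) => R p.1 q.1 ∧ p.2 = q.2)
      (prodDist μ₁ ν) (prodDist μ₂ ν) := by
  intro E
  rw [mass_prodDist, mass_prodDist]
  simp only [preimage_relImage_sync]
  exact sum_mul_le_sum_mul_add_of_le_add hν.1 hν.2 hε fun u => h _

/-- Non-expansiveness of the synchronous product: if μ₁ L^ε(R) μ₂ then
    (μ₁ ⊗ ν) L^ε(R') (μ₂ ⊗ ν), where (x,u) R' (y,v) iff x R y and u = v. -/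
theorem lift_prod {S₁ S₂ S : Type*} [Fintype S₁] [Fintype S₂] [Fintype S]
    (μ₁ : S₁ → ℝ) (μ₂ : S₂ → ℝ) (ν : S → ℝ)
    (h₁ : IsSubdist μ₁) (h₂ : IsSubdist μ₂) (hν : IsSubdist ν)
    (R : S₁ → S₂ → Prop) (ε : ℝ) (hε : 0 ≤ ε)
    (h : Lift2 ε R μ₁ μ₂) :
    Lift2 ε (fun (p : S₁ × S) (q : S₂ × S) => R p.1 q.1 ∧ p.2 = q.2)
      (prodDist μ₁ ν) (prodDist μ₂ ν) :=
  lift_prod_general μ₁ μ₂ ν hν R ε hε h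
end
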